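/- arXiv:1904.11860 — 5 statements merged into one kernel-verified Lean document; each statement's English description precedes it below -/
import Mathlib

section
/- Let u, v ∈ ℝ² be nonzero vectors with ⟨u,v⟩ = ‖u‖‖v‖cos φ where cos φ ≠ 1, let r > 0, and define D(t) = 1 + cosh(t‖u‖/r)·cosh(t‖v‖/r) − sinh(t‖u‖/r)·sinh(t‖v‖/r)·cos φ. Then lim_{t→∞} (1/t)·2r·artanh(√(1 − 2/D(t))) = ‖u‖ + ‖v‖. -/
open Real Filter InnerProductSpace

/-- Inverse hyperbolic tangent. -/
noncomputable def artanh (x : ℝ) : ℝ := (1 / 2) * Real.log ((1 + x) / (1 - x))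

/-- Inverse hyperbolic cosine. -/
noncomputable def arcosh (x : ℝ) : ℝ := Real.log (x + Real.sqrt (x ^ 2 - 1))

/-! With `a = ‖u‖ / r`, `b = ‖v‖ / r` and `c = cos φ`, the addition formulas give
`D t = 1 + (1 - c) / 2 * cosh ((a + b) t) + (1 + c) / 2 * cosh ((a - b) t)`.
Hence `D ≥ 2` and `exp (-(a + b) t) * D t → (1 - c) / 4 > 0`, so `log (D t) = (a + b) t + O(1)`.
Since `(1 + x) / (1 - x) = (1 + x) ^ 2 / (1 - x ^ 2)`, for `x = √(1 - 2 / D)` we get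
`2 artanh x = log D + 2 log (1 + x) - log 2`, which differs from `log D` by at most `log 2`;
dividing by `t` gives the limit `r (a + b) = ‖u‖ + ‖v‖`. -/

open Topology

theorem one_add_cosh_mul_cosh_sub_sinh_mul_sinh_mul (x y c : ℝ) :
    1 + cosh x * cosh y - sinh x * sinh y * c
      = 1 + (1 - c) / 2 * cosh (x + y) + (1 + c) / 2 * cosh (x - y) := by
  rw [cosh_add, cosh_sub]
  ring

theorem two_le_one_add_cosh_mul_cosh_sub_sinh_mul_sinh_mul (x y : ℝ) {c : ℝ}
    (hc₀ : -1 ≤ c) (hc₁ : c ≤ 1) : 2 ≤ 1 + cosh x * cosh y - sinh x * sinh y * c := by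
  rw [one_add_cosh_mul_cosh_sub_sinh_mul_sinh_mul]
  nlinarith [one_le_cosh (x + y), one_le_cosh (x - y)]

theorem exp_neg_mul_mul_cosh_mul (t s d : ℝ) :
    exp (-(t * s)) * cosh (t * d) = (exp (t * (d - s)) + exp (t * -(d + s))) / 2 := by
  rw [cosh_eq, mul_div_assoc', mul_add, ← exp_add, ← exp_add]
  ring_nf

theorem tendsto_exp_mul_of_neg {k : ℝ} (hk : k < 0) :
    Tendsto (fun t => exp (t * k)) atTop (𝓝 0) :=
  tendsto_exp_comp_nhds_zero.2 (tendsto_id.atTop_mul_const_of_neg hk)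

theorem tendsto_exp_neg_mul_mul_cosh_mul_self {s : ℝ} (hs : 0 < s) :
    Tendsto (fun t => exp (-(t * s)) * cosh (t * s)) atTop (𝓝 (1 / 2)) := by
  have h := ((tendsto_exp_mul_of_neg (k := -(s + s)) (by linarith)).const_add 1).div_const 2
  simp only [exp_neg_mul_mul_cosh_mul, sub_self, mul_zero, exp_zero]
  simpa using h

theorem tendsto_exp_neg_mul_mul_cosh_mul_of_abs_lt {s d : ℝ} (hd : |d| < s) :
    Tendsto (fun t => exp (-(t * s)) * cosh (t * d)) atTop (𝓝 0) := by
  obtain ⟨hd₀, hd₁⟩ := abs_lt.1 hd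
  have h := ((tendsto_exp_mul_of_neg (k := d - s) (by linarith)).add
    (tendsto_exp_mul_of_neg (k := -(d + s)) (by linarith))).div_const 2
  simp only [exp_neg_mul_mul_cosh_mul]
  simpa using h

theorem tendsto_exp_neg_mul_mul_one_add_cosh_mul_cosh_sub_sinh_mul_sinh_mul
    {a b : ℝ} (ha : 0 < a) (hb : 0 < b) (c : ℝ) :
    Tendsto (fun t => exp (-(t * (a + b))) *
        (1 + cosh (t * a) * cosh (t * b) - sinh (t * a) * sinh (t * b) * c))
      atTop (𝓝 ((1 - c) / 4)) := by
  have hsum := tendsto_exp_neg_mul_mul_cosh_mul_self (add_pos ha hb)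
  have hdiff := tendsto_exp_neg_mul_mul_cosh_mul_of_abs_lt (s := a + b) (d := a - b)
    (abs_sub_lt_iff.2 ⟨by linarith, by linarith⟩)
  have hexp := tendsto_exp_mul_of_neg (k := -(a + b)) (by linarith)
  have h := (hexp.add (hsum.const_mul ((1 - c) / 2))).add (hdiff.const_mul ((1 + c) / 2))
  convert h using 1
  · ext t
    rw [one_add_cosh_mul_cosh_sub_sinh_mul_sinh_mul, ← mul_add, ← mul_sub, neg_mul_eq_mul_neg]
    ring
  · congr 1
    ring

theorem tendsto_log_div_self_of_tendsto_exp_neg_mul_mul {f : ℝ → ℝ} {s L : ℝ} (hL : 0 < L)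
    (hf : Tendsto (fun t => exp (-(t * s)) * f t) atTop (𝓝 L)) :
    Tendsto (fun t => log (f t) / t) atTop (𝓝 s) := by
  have hlog : Tendsto (fun t => log (exp (-(t * s)) * f t) / t) atTop (𝓝 0) :=
    (hf.log hL.ne').div_atTop tendsto_id
  have h := hlog.const_add s
  rw [add_zero] at h
  refine h.congr' ?_
  filter_upwards [hf.eventually_ne hL.ne', eventually_ne_atTop 0] with t hft ht
  rw [log_mul (exp_ne_zero _) (right_ne_zero_of_mul hft), log_exp]
  field_simp
  ring

theorem two_mul_artanh_sqrt_one_sub_two_div {D : ℝ} (hD : 2 ≤ D) :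
    2 * _root_.artanh √(1 - 2 / D) = log D + (2 * log (1 + √(1 - 2 / D)) - log 2) := by
  set x := √(1 - 2 / D)
  have hx₀ : 0 ≤ x := sqrt_nonneg _
  have hD₀ : 0 < 2 / D := by positivity
  have hx_sq : x ^ 2 = 1 - 2 / D := sq_sqrt (by linarith [(div_le_one (by linarith)).2 hD])
  have hx₁ : x < 1 := by nlinarith
  have hratio : (1 + x) / (1 - x) = (1 + x) ^ 2 * D / 2 := by
    rw [div_eq_iff (by linarith)]
    have hD_mul : D * (1 - x ^ 2) = 2 := by
      rw [hx_sq]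
      field_simp
      ring
    linear_combination (-(1 + x) / 2) * hD_mul
  rw [_root_.artanh, hratio, log_div (by positivity) two_ne_zero,
    log_mul (by positivity) (by positivity), log_pow]
  push_cast
  ring

theorem abs_two_mul_artanh_sqrt_one_sub_two_div_sub_log_le {D : ℝ} (hD : 2 ≤ D) :
    |2 * _root_.artanh √(1 - 2 / D) - log D| ≤ log 2 := by
  have hx₀ : 0 ≤ √(1 - 2 / D) := sqrt_nonneg _
  have hx₁ : √(1 - 2 / D) ≤ 1 :=
    sqrt_le_one.2 (by linarith [div_pos two_pos (by linarith : 0 < D)])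
  have hlog₀ : 0 ≤ log (1 + √(1 - 2 / D)) := log_nonneg (by linarith)
  have hlog₁ : log (1 + √(1 - 2 / D)) ≤ log 2 :=
    log_le_log (by positivity) (by linarith)
  rw [two_mul_artanh_sqrt_one_sub_two_div hD, add_sub_cancel_left, abs_le]
  constructor <;> linarith

theorem tendsto_two_mul_artanh_sqrt_one_sub_two_div_div_self {f : ℝ → ℝ} {s : ℝ}
    (hf₂ : ∀ t, 2 ≤ f t) (hf : Tendsto (fun t => log (f t) / t) atTop (𝓝 s)) :
    Tendsto (fun t => 2 * _root_.artanh √(1 - 2 / f t) / t) atTop (𝓝 s) := by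
  have hrem : Tendsto (fun t => (2 * _root_.artanh √(1 - 2 / f t) - log (f t)) / t)
      atTop (𝓝 0) := by
    refine squeeze_zero_norm' ?_ ((tendsto_const_nhds (x := log 2)).div_atTop tendsto_id)
    filter_upwards [eventually_gt_atTop 0] with t ht
    rw [norm_div, Real.norm_of_nonneg ht.le]
    exact div_le_div_of_nonneg_right
      (abs_two_mul_artanh_sqrt_one_sub_two_div_sub_log_le (hf₂ t)) ht.le
  have h := hf.add hrem
  rw [add_zero] at h
  refine h.congr fun t => ?_
  ring

theorem hyperbolic_distance_linear_growth_general
    (u v : EuclideanSpace ℝ (Fin 2)) (hu : u ≠ 0) (hv : v ≠ 0)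
    (φ : ℝ) (hφ : Real.cos φ ≠ 1)
    (r : ℝ) (hr : 0 < r)
    (D : ℝ → ℝ)
    (hD : ∀ t, D t = 1 + Real.cosh (t * ‖u‖ / r) * Real.cosh (t * ‖v‖ / r)
            - Real.sinh (t * ‖u‖ / r) * Real.sinh (t * ‖v‖ / r) * Real.cos φ) :
    Tendsto (fun t => (1 / t) * (2 * r * _root_.artanh (Real.sqrt (1 - 2 / D t))))
      atTop (nhds (‖u‖ + ‖v‖)) := by
  simp only [mul_div_assoc] at hD
  have ha : 0 < ‖u‖ / r := div_pos (norm_pos_iff.2 hu) hr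
  have hb : 0 < ‖v‖ / r := div_pos (norm_pos_iff.2 hv) hr
  have hD₂ : ∀ t, 2 ≤ D t := fun t => hD t ▸
    two_le_one_add_cosh_mul_cosh_sub_sinh_mul_sinh_mul _ _ (neg_one_le_cos φ) (cos_le_one φ)
  have hgrowth : Tendsto (fun t => exp (-(t * (‖u‖ / r + ‖v‖ / r))) * D t) atTop
      (𝓝 ((1 - cos φ) / 4)) := by
    simpa only [hD] using
      tendsto_exp_neg_mul_mul_one_add_cosh_mul_cosh_sub_sinh_mul_sinh_mul ha hb (cos φ)
  have hcos : 0 < (1 - cos φ) / 4 := by linarith [lt_of_le_of_ne (cos_le_one φ) hφ]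
  have h := (tendsto_two_mul_artanh_sqrt_one_sub_two_div_div_self hD₂
    (tendsto_log_div_self_of_tendsto_exp_neg_mul_mul hcos hgrowth)).const_mul r
  convert h using 2 with t
  · ring
  · field_simp

theorem hyperbolic_distance_linear_growth
    (u v : EuclideanSpace ℝ (Fin 2)) (hu : u ≠ 0) (hv : v ≠ 0)
    (φ : ℝ) (huv : ⟪u, v⟫_ℝ = ‖u‖ * ‖v‖ * Real.cos φ) (hφ : Real.cos φ ≠ 1)
    (r : ℝ) (hr : 0 < r)
    (D : ℝ → ℝ)
    (hD : ∀ t, D t = 1 + Real.cosh (t * ‖u‖ / r) * Real.cosh (t * ‖v‖ / r)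
            - Real.sinh (t * ‖u‖ / r) * Real.sinh (t * ‖v‖ / r) * Real.cos φ) :
    Tendsto (fun t => (1 / t) * (2 * r * _root_.artanh (Real.sqrt (1 - 2 / D t))))
      atTop (nhds (‖u‖ + ‖v‖)) :=
  hyperbolic_distance_linear_growth_general u v hu hv φ hφ r hr D hD
end

section
/- Let a, b > 0, c ∈ [−1, 1) with c ≠ 1, and define N(t) = (a − b·c)·cosh(tb)·sinh(ta) + (b − a·c)·cosh(ta)·sinh(tb) and D(t) = 1 + cosh(ta)·cosh(tb) − sinh(ta)·sinh(tb)·c. Then lim_{t→∞} N(t)/D(t) = a + b. -/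
open Real Filter Topology

/-!
In the variables `x = exp (-t a)`, `y = exp (-t b)`, both `N t` and `D t` become polynomials in
`x, y` divided by `4 x y`, so `N t / D t = R (x, y)` for a rational function `R` that is continuous at
`(0, 0)` with `R (0, 0) = (a + b) (1 - c) / (1 - c)`. -/

lemma Real.cosh_eq_exp_neg (s : ℝ) : cosh s = (1 + exp (-s) ^ 2) / (2 * exp (-s)) := by
  rw [cosh_eq, exp_neg]
  field_simp

lemma Real.sinh_eq_exp_neg (s : ℝ) : sinh s = (1 - exp (-s) ^ 2) / (2 * exp (-s)) := by
  rw [sinh_eq, exp_neg]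
  field_simp

lemma Real.tendsto_exp_neg_mul_atTop {k : ℝ} (hk : 0 < k) :
    Tendsto (fun t => exp (-(t * k))) atTop (𝓝 0) :=
  tendsto_exp_neg_atTop_nhds_zero.comp (tendsto_id.atTop_mul_const hk)

theorem lhopital_key_limit_general
    (a b c : ℝ) (ha : 0 < a) (hb : 0 < b) (hc1 : c ≠ 1)
    (N D : ℝ → ℝ)
    (hN : ∀ t, N t = (a - b * c) * Real.cosh (t * b) * Real.sinh (t * a)
            + (b - a * c) * Real.cosh (t * a) * Real.sinh (t * b))
    (hD : ∀ t, D t = 1 + Real.cosh (t * a) * Real.cosh (t * b)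
            - Real.sinh (t * a) * Real.sinh (t * b) * c) :
    Tendsto (fun t => N t / D t) atTop (nhds (a + b)) := by
  set R : ℝ × ℝ → ℝ := fun p =>
    ((a - b * c) * (1 + p.2 ^ 2) * (1 - p.1 ^ 2) + (b - a * c) * (1 + p.1 ^ 2) * (1 - p.2 ^ 2)) /
      (4 * p.1 * p.2 + (1 + p.1 ^ 2) * (1 + p.2 ^ 2) - c * (1 - p.1 ^ 2) * (1 - p.2 ^ 2))
  have h1c : 1 - c ≠ 0 := sub_ne_zero.mpr hc1.symm
  have hR0 : R (0, 0) = a + b := by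
    rw [div_eq_iff (by simpa using h1c)]
    ring
  have hR : ContinuousAt R (0, 0) := by
    refine ContinuousAt.div (by fun_prop) (by fun_prop) ?_
    simpa using h1c
  have hlim := hR.tendsto.comp
    ((tendsto_exp_neg_mul_atTop ha).prodMk_nhds (tendsto_exp_neg_mul_atTop hb))
  rw [hR0] at hlim
  refine hlim.congr fun t => ?_
  have hx := exp_pos (-(t * a))
  have hy := exp_pos (-(t * b))
  simp only [Function.comp_apply, R, hN, hD, cosh_eq_exp_neg, sinh_eq_exp_neg]
  field_simp
  norm_num

theorem lhopital_key_limit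
    (a b c : ℝ) (ha : 0 < a) (hb : 0 < b) (hc : c ∈ Set.Icc (-1 : ℝ) 1) (hc1 : c ≠ 1)
    (N D : ℝ → ℝ)
    (hN : ∀ t, N t = (a - b * c) * Real.cosh (t * b) * Real.sinh (t * a)
            + (b - a * c) * Real.cosh (t * a) * Real.sinh (t * b))
    (hD : ∀ t, D t = 1 + Real.cosh (t * a) * Real.cosh (t * b)
            - Real.sinh (t * a) * Real.sinh (t * b) * c) :
    Tendsto (fun t => N t / D t) atTop (nhds (a + b)) :=
  lhopital_key_limit_general a b c ha hb hc1 N D hN hD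
end

section
/- On the unit sphere S², the spherical distance formula reduces correctly in the flat limit: for fixed a, b ≥ 0 and φ ∈ ℝ, lim_{r→∞} r·arccos(cos(a/r)·cos(b/r) + sin(a/r)·sin(b/r)·cos φ) = √(a² + b² − 2ab·cos φ). -/
/-!
Put `θ r = arccos g(r)`, where `g(r)` is the argument of `arccos`. The half-angle formula in the
form `2 (1 - cos θ) = (θ · sinc (θ / 2))²` shows that `(r θ)²` and `2 r² (1 - g)` differ by the
factor `sinc (θ / 2)² → 1`. Expanding `1 - g` and using `r sin (x / r) → x` and
`2 r² (1 - cos (x / r)) → x²` gives `2 r² (1 - g) → a² + b² - 2 a b cos φ`.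
-/

open Real Filter Topology

namespace Real

lemma mul_sinc (x : ℝ) : x * sinc x = sin x := by
  rcases eq_or_ne x 0 with rfl | hx
  · simp
  · rw [sinc_of_ne_zero hx, mul_div_cancel₀ _ hx]

lemma two_mul_one_sub_cos (x : ℝ) : 2 * (1 - cos x) = (x * sinc (x / 2)) ^ 2 := by
  have hsin : x * sinc (x / 2) = 2 * sin (x / 2) := by rw [← mul_sinc]; ring
  have hcos : cos x = 1 - 2 * sin (x / 2) ^ 2 := by
    rw [← cos_two_mul_eq_one_sub, mul_div_cancel₀ x two_ne_zero]
  rw [hsin, hcos]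
  ring

lemma abs_cos_mul_cos_add_sin_mul_sin_mul_le_one (x y : ℝ) {c : ℝ} (hc : |c| ≤ 1) :
    |cos x * cos y + sin x * sin y * c| ≤ 1 := by
  calc |cos x * cos y + sin x * sin y * c|
      ≤ |cos x| * |cos y| + |sin x| * |sin y| := by
        rw [← abs_mul, ← abs_mul]
        refine (abs_add_le _ _).trans (add_le_add_right ?_ _)
        rw [abs_mul]
        exact mul_le_of_le_one_right (abs_nonneg _) hc
    _ ≤ 1 := by
        -- AM-GM on each product, then `sin² + cos² = 1` twice
        nlinarith [sq_abs (cos x), sq_abs (cos y), sq_abs (sin x), sq_abs (sin y),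
          sin_sq_add_cos_sq x, sin_sq_add_cos_sq y,
          sq_nonneg (|cos x| - |cos y|), sq_nonneg (|sin x| - |sin y|)]

end Real

lemma tendsto_const_div_atTop (x : ℝ) : Tendsto (fun r : ℝ => x / r) atTop (𝓝 0) :=
  tendsto_const_nhds.div_atTop tendsto_id

lemma tendsto_sinc_const_div_atTop (x : ℝ) : Tendsto (fun r : ℝ => sinc (x / r)) atTop (𝓝 1) :=
  sinc_zero ▸ (continuous_sinc.tendsto 0).comp (tendsto_const_div_atTop x)

lemma tendsto_mul_sin_const_div_atTop (x : ℝ) :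
    Tendsto (fun r : ℝ => r * sin (x / r)) atTop (𝓝 x) := by
  have h := (tendsto_sinc_const_div_atTop x).const_mul x
  rw [mul_one] at h
  refine h.congr' ?_
  filter_upwards [eventually_ne_atTop 0] with r hr
  rw [← mul_sinc, ← mul_assoc, mul_div_cancel₀ x hr]

lemma tendsto_two_mul_sq_mul_one_sub_cos_const_div_atTop (x : ℝ) :
    Tendsto (fun r : ℝ => 2 * r ^ 2 * (1 - cos (x / r))) atTop (𝓝 (x ^ 2)) := by
  have h := ((tendsto_sinc_const_div_atTop (x / 2)).const_mul x).pow 2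
  rw [mul_one] at h
  refine h.congr' ?_
  filter_upwards [eventually_ne_atTop 0] with r hr
  rw [mul_comm 2, mul_assoc, two_mul_one_sub_cos, div_right_comm, ← mul_pow, ← mul_assoc,
    mul_div_cancel₀ x hr]

lemma tendsto_mul_of_tendsto_two_mul_sq_mul_one_sub_cos {α : Type*} {l : Filter α} {r θ : α → ℝ}
    {M : ℝ} (hθ : Tendsto θ l (𝓝 0)) (hrθ : ∀ᶠ x in l, 0 ≤ r x * θ x)
    (h : Tendsto (fun x => 2 * r x ^ 2 * (1 - cos (θ x))) l (𝓝 M)) :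
    Tendsto (fun x => r x * θ x) l (𝓝 √M) := by
  have hsinc : Tendsto (fun x => sinc (θ x / 2) ^ 2) l (𝓝 1) := by
    simpa using ((continuous_sinc.tendsto 0).comp (by simpa using hθ.div_const 2)).pow 2
  have hsq : Tendsto (fun x => (r x * θ x) ^ 2) l (𝓝 M) := by
    refine (div_one M ▸ h.div hsinc one_ne_zero).congr' ?_
    filter_upwards [hsinc.eventually_ne one_ne_zero] with x hx
    change 2 * r x ^ 2 * (1 - cos (θ x)) / sinc (θ x / 2) ^ 2 = _
    rw [mul_comm 2, mul_assoc, two_mul_one_sub_cos, mul_pow, mul_pow, ← mul_assoc,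
      mul_div_cancel_right₀ _ hx]
  refine ((continuous_sqrt.tendsto M).comp hsq).congr' ?_
  filter_upwards [hrθ] with x hx
  exact sqrt_sq hx

lemma tendsto_two_mul_sq_mul_one_sub_spherical_cos_atTop (a b c : ℝ) :
    Tendsto (fun r : ℝ => 2 * r ^ 2 *
        (1 - (cos (a / r) * cos (b / r) + sin (a / r) * sin (b / r) * c)))
      atTop (𝓝 (a ^ 2 + b ^ 2 - 2 * a * b * c)) := by
  have hcos : Tendsto (fun r : ℝ => cos (a / r)) atTop (𝓝 1) :=
    cos_zero ▸ (continuous_cos.tendsto 0).comp (tendsto_const_div_atTop a)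
  have h := (tendsto_two_mul_sq_mul_one_sub_cos_const_div_atTop a).add
    ((hcos.mul (tendsto_two_mul_sq_mul_one_sub_cos_const_div_atTop b)).sub
      (((tendsto_mul_sin_const_div_atTop a).mul (tendsto_mul_sin_const_div_atTop b)).const_mul
        (2 * c)))
  convert h using 2 with r <;> ring

theorem spherical_flat_limit_general (a b φ : ℝ) :
    Tendsto (fun r : ℝ =>
        r * Real.arccos (Real.cos (a / r) * Real.cos (b / r)
          + Real.sin (a / r) * Real.sin (b / r) * Real.cos φ))
      atTop (nhds (Real.sqrt (a ^ 2 + b ^ 2 - 2 * a * b * Real.cos φ))) := by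
  set g : ℝ → ℝ := fun r => cos (a / r) * cos (b / r) + sin (a / r) * sin (b / r) * cos φ
  have hg_mem (r : ℝ) : -1 ≤ g r ∧ g r ≤ 1 :=
    abs_le.mp (abs_cos_mul_cos_add_sin_mul_sin_mul_le_one _ _ (abs_cos_le_one φ))
  have hg : Tendsto g atTop (𝓝 1) := by
    have hcont : Continuous fun s : ℝ =>
        cos (a * s) * cos (b * s) + sin (a * s) * sin (b * s) * cos φ := by fun_prop
    simpa [g, div_eq_mul_inv, Function.comp_def] using
      (hcont.tendsto 0).comp tendsto_inv_atTop_zero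
  refine tendsto_mul_of_tendsto_two_mul_sq_mul_one_sub_cos (r := id) ?_ ?_ ?_
  · simpa [g, arccos_one, Function.comp_def] using (continuous_arccos.tendsto 1).comp hg
  · filter_upwards [eventually_ge_atTop 0] with r hr
    exact mul_nonneg hr (arccos_nonneg _)
  · refine (tendsto_two_mul_sq_mul_one_sub_spherical_cos_atTop a b (cos φ)).congr fun r => ?_
    simp only [id, cos_arccos (hg_mem r).1 (hg_mem r).2, g]

theorem spherical_flat_limit (a b φ : ℝ) (ha : 0 ≤ a) (hb : 0 ≤ b) :
    Tendsto (fun r : ℝ =>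
        r * Real.arccos (Real.cos (a / r) * Real.cos (b / r)
          + Real.sin (a / r) * Real.sin (b / r) * Real.cos φ))
      atTop (nhds (Real.sqrt (a ^ 2 + b ^ 2 - 2 * a * b * Real.cos φ))) :=
  spherical_flat_limit_general a b φ
end

section
/- In the flat limit the hyperbolic distance formula also recovers the Euclidean one: for fixed a, b ≥ 0 and φ ∈ ℝ, lim_{r→∞} 2r·artanh(√(1 − 2/D_r)) = √(a² + b² − 2ab·cos φ), where D_r = 1 + cosh(a/r)·cosh(b/r) − sinh(a/r)·sinh(b/r)·cos φ. -/
/-! Put `x = 1/r` and let `C(x) = cosh(ax)cosh(bx) - sinh(ax)sinh(bx)cos φ`, so that the expression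
under the limit is `(2 artanh √(1 - 2/(1 + C))) / x`. Since `tanh (arsinh y) = y/√(1 + y²)`, the
numerator equals `2 arsinh √((C - 1)/2)` (that is, `arcosh C`). Expanding,
`C - 1 = 2 sinh²((a - b)x/2) + sinh(ax) sinh(bx)(1 - cos φ)`, so `(C - 1)/x² → (a² + b² - 2ab cos φ)/2`
as `x → 0`, and `arsinh y ~ y` at `0` finishes the computation. -/

open Real Filter

open Topology Asymptotics

lemma artanh_eq_real_artanh {x : ℝ} (hx : x ∈ Set.Icc (-1) 1) : _root_.artanh x = Real.artanh x :=
  (Real.artanh_eq_half_log hx).symm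

lemma artanh_sqrt_one_sub_two_div_one_add {c : ℝ} (hc : 1 ≤ c) :
    _root_.artanh √(1 - 2 / (1 + c)) = arsinh √((c - 1) / 2) := by
  have h : √(1 - 2 / (1 + c)) = tanh (arsinh √((c - 1) / 2)) := by
    rw [tanh_arsinh, sq_sqrt (by linarith), ← sqrt_div' _ (by linarith)]
    have hc' : 1 + c ≠ 0 := by linarith
    rw [show 1 + (c - 1) / 2 = (1 + c) / 2 by ring]
    congr 1
    field_simp
    ring
  rw [h, artanh_eq_real_artanh ⟨(neg_one_lt_tanh _).le, (tanh_lt_one _).le⟩, Real.artanh_tanh]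

lemma isEquivalent_arsinh : arsinh ~[𝓝 0] fun x => x := by
  simpa [IsEquivalent, Pi.sub_def] using hasDerivAt_iff_isLittleO.mp (hasDerivAt_arsinh 0)

lemma tendsto_sinh_mul_div (k : ℝ) : Tendsto (fun x => sinh (k * x) / x) (𝓝[≠] 0) (𝓝 k) := by
  have h : HasDerivAt (fun x => sinh (k * x)) k 0 := by
    simpa using ((hasDerivAt_id 0).const_mul k).sinh
  simpa [div_eq_inv_mul] using h.tendsto_slope_zero

/-- `cosh (x d)`, where `d` is the third side of a triangle with sides `a`, `b` and angle `φ` between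
them in the plane of curvature `-x²` (hyperbolic law of cosines). -/
noncomputable def coshThirdSide (a b φ x : ℝ) : ℝ :=
  cosh (a * x) * cosh (b * x) - sinh (a * x) * sinh (b * x) * cos φ

lemma coshThirdSide_sub_one (a b φ x : ℝ) :
    coshThirdSide a b φ x - 1 =
      2 * sinh ((a - b) / 2 * x) ^ 2 + sinh (a * x) * sinh (b * x) * (1 - cos φ) := by
  have h : cosh ((a - b) * x) = 2 * sinh ((a - b) / 2 * x) ^ 2 + 1 := by
    rw [show (a - b) * x = 2 * ((a - b) / 2 * x) by ring, cosh_two_mul, cosh_sq]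
    ring
  have h' : cosh ((a - b) * x) = cosh (a * x) * cosh (b * x) - sinh (a * x) * sinh (b * x) := by
    rw [sub_mul, cosh_sub]
  rw [coshThirdSide]
  linear_combination h - h'

lemma one_le_coshThirdSide {a b x : ℝ} (φ : ℝ) (ha : 0 ≤ a) (hb : 0 ≤ b) (hx : 0 ≤ x) :
    1 ≤ coshThirdSide a b φ x := by
  have hcos : 0 ≤ 1 - cos φ := sub_nonneg.2 (cos_le_one φ)
  have hsinh : 0 ≤ sinh (a * x) * sinh (b * x) :=
    mul_nonneg (sinh_nonneg_iff.2 (mul_nonneg ha hx)) (sinh_nonneg_iff.2 (mul_nonneg hb hx))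
  rw [← sub_nonneg, coshThirdSide_sub_one]
  positivity

lemma tendsto_coshThirdSide_sub_one_div_sq (a b φ : ℝ) :
    Tendsto (fun x => (coshThirdSide a b φ x - 1) / x ^ 2) (𝓝[≠] 0)
      (𝓝 ((a ^ 2 + b ^ 2 - 2 * a * b * cos φ) / 2)) := by
  have h := (((tendsto_sinh_mul_div ((a - b) / 2)).pow 2).const_mul 2).add
    (((tendsto_sinh_mul_div a).mul (tendsto_sinh_mul_div b)).mul_const (1 - cos φ))
  rw [show (a ^ 2 + b ^ 2 - 2 * a * b * cos φ) / 2
    = 2 * ((a - b) / 2) ^ 2 + a * b * (1 - cos φ) by ring]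
  refine h.congr fun x => ?_
  rw [coshThirdSide_sub_one]
  ring

lemma tendsto_two_mul_inv_mul_artanh {a b : ℝ} (φ : ℝ) (ha : 0 ≤ a) (hb : 0 ≤ b) :
    Tendsto (fun x => 2 * x⁻¹ * _root_.artanh √(1 - 2 / (1 + coshThirdSide a b φ x)))
      (𝓝[>] 0) (𝓝 √(a ^ 2 + b ^ 2 - 2 * a * b * cos φ)) := by
  set s := fun x => √((coshThirdSide a b φ x - 1) / 2)
  have hs : Tendsto s (𝓝[>] 0) (𝓝 0) := by
    have hcont : Continuous s := by simp only [s, coshThirdSide]; fun_prop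
    simpa [s, coshThirdSide] using (hcont.tendsto 0).mono_left nhdsWithin_le_nhds
  -- `s` vanishes identically when `a = b` and `cos φ = 1`, so we cannot divide by it
  have hequiv : (fun x => 2 * x⁻¹ * arsinh (s x)) ~[𝓝[>] 0] fun x => 2 * x⁻¹ * s x :=
    IsEquivalent.refl.mul (isEquivalent_arsinh.comp_tendsto hs)
  have hlim : Tendsto (fun x => √(2 * ((coshThirdSide a b φ x - 1) / x ^ 2))) (𝓝[>] 0)
      (𝓝 √(a ^ 2 + b ^ 2 - 2 * a * b * cos φ)) := by
    have := (((tendsto_coshThirdSide_sub_one_div_sq a b φ).mono_left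
      (nhdsWithin_mono 0 fun x (hx : 0 < x) => hx.ne')).const_mul 2).sqrt
    rwa [mul_div_cancel₀ _ two_ne_zero] at this
  refine (hequiv.symm.tendsto_nhds (hlim.congr' ?_)).congr' ?_
  all_goals filter_upwards [self_mem_nhdsWithin] with x (hx : 0 < x)
  · have hc := one_le_coshThirdSide φ ha hb hx.le
    rw [show 2 * ((coshThirdSide a b φ x - 1) / x ^ 2) = (2 * x⁻¹ * s x) ^ 2 by
      rw [mul_pow, mul_pow, sq_sqrt (by linarith)]; field_simp]
    exact sqrt_sq (by positivity)
  · rw [artanh_sqrt_one_sub_two_div_one_add (one_le_coshThirdSide φ ha hb hx.le)]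

theorem hyperbolic_flat_limit (a b φ : ℝ) (ha : 0 ≤ a) (hb : 0 ≤ b) :
    Tendsto (fun r : ℝ =>
        2 * r * _root_.artanh (Real.sqrt (1 - 2 /
          (1 + Real.cosh (a / r) * Real.cosh (b / r)
             - Real.sinh (a / r) * Real.sinh (b / r) * Real.cos φ))))
      atTop (nhds (Real.sqrt (a ^ 2 + b ^ 2 - 2 * a * b * Real.cos φ))) := by
  refine ((tendsto_two_mul_inv_mul_artanh φ ha hb).comp tendsto_inv_atTop_nhdsGT_zero).congr
    fun r => ?_
  simp only [Function.comp_apply, coshThirdSide, inv_inv, div_eq_mul_inv, add_sub_assoc]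
end

section
/- The squared spherical distance admits the second-order expansion: for a, b ≥ 0, φ ∈ ℝ, and d(t) = arccos(cos(ta)·cos(tb) + sin(ta)·sin(tb)·cos φ), one has d(t)² = t²(a² + b² − 2ab cos φ) − (1/3)·t⁴·a²b²·sin²φ + o(t⁴) as t → 0⁺. -/
open Real Filter Asymptotics Topology

/-! With `c = cos φ`, the addition formulas write the spherical law of cosines as a convex
combination `cos d = (1 + c)/2 · cos (t(a - b)) + (1 - c)/2 · cos (t(a + b))`, so the Taylor
polynomial of cosine gives `1 - cos d = A t² - B t⁴ + O(t⁶)`. Inverting the expansion of cosine,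
`arccos (1 - x)² = 2x + x²/3 + O(x³)` as `x → 0⁺` (Jordan's inequality
`θ² ≤ π²/2 · (1 - cos θ)` controls the error), hence `d² = 2A t² + (A²/3 - 2B) t⁴ + O(t⁶)`.
Here `2A` and `24B` are the mean of `(a ∓ b)²` and of `(a ∓ b)⁴` under the weights `(1 ± c)/2`,
so `A²/3 - 2B` is `-1/12` times the variance of `(a ∓ b)²`, that is `-a²b² sin² φ / 3`. -/

lemma Real.abs_cos_sub_taylor_le {x : ℝ} (hx : |x| ≤ 1) :
    |cos x - (1 - x ^ 2 / 2 + x ^ 4 / 24)| ≤ |x| ^ 6 := by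
  have hsum : ∑ m ∈ Finset.range 6, ((x : ℂ) * Complex.I) ^ m / m.factorial =
      ((1 - x ^ 2 / 2 + x ^ 4 / 24 : ℝ) : ℂ)
        + ((x - x ^ 3 / 6 + x ^ 5 / 120 : ℝ) : ℂ) * Complex.I := by
    simp only [Finset.sum_range_succ, Finset.sum_range_zero, Nat.factorial]
    push_cast
    linear_combination (x ^ 2 / 2 + x ^ 3 * Complex.I / 6 + x ^ 4 * (Complex.I ^ 2 - 1) / 24
      + x ^ 5 * Complex.I * (Complex.I ^ 2 - 1) / 120) * Complex.I_sq
  have hexp := Complex.exp_bound (x := x * Complex.I) (by simpa) (n := 6) (by norm_num)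
  rw [hsum] at hexp
  calc |cos x - (1 - x ^ 2 / 2 + x ^ 4 / 24)|
      = |(Complex.exp (x * Complex.I) - (((1 - x ^ 2 / 2 + x ^ 4 / 24 : ℝ) : ℂ)
          + ((x - x ^ 3 / 6 + x ^ 5 / 120 : ℝ) : ℂ) * Complex.I)).re| := by
        simp only [Complex.sub_re, Complex.add_re, Complex.mul_I_re, Complex.ofReal_im, neg_zero,
          add_zero, Complex.ofReal_re, Complex.exp_ofReal_mul_I_re]
    _ ≤ _ := Complex.abs_re_le_norm _
    _ ≤ |x| ^ 6 * (7 / 4320) := by norm_num [Nat.factorial] at hexp ⊢; linarith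
    _ ≤ |x| ^ 6 := by nlinarith [pow_nonneg (abs_nonneg x) 6]

lemma Real.isBigO_cos_sub_taylor :
    (fun x => cos x - (1 - x ^ 2 / 2 + x ^ 4 / 24)) =O[𝓝 0] fun x => x ^ 6 := by
  refine IsBigO.of_bound 1 ?_
  filter_upwards [Metric.closedBall_mem_nhds (0 : ℝ) one_pos] with x hx
  simpa using abs_cos_sub_taylor_le (by simpa using hx)

lemma Asymptotics.IsBigO.mul_of_tendsto {α : Type*} {l : Filter α} {f g h : α → ℝ} {c : ℝ}
    (hfg : f =O[l] g) (hh : Tendsto h l (𝓝 c)) : (fun x => f x * h x) =O[l] g := by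
  simpa using hfg.mul (hh.isBigO_one ℝ)

lemma Asymptotics.IsBigO.comp_mul_const {f : ℝ → ℝ} {n : ℕ} (hf : f =O[𝓝 0] fun x => x ^ n)
    (c : ℝ) : (fun t => f (t * c)) =O[𝓝 0] fun t => t ^ n := by
  refine (hf.comp_tendsto ((continuous_mul_const c).tendsto' 0 0 (zero_mul c))).trans ?_
  exact ((isBigO_refl (fun t : ℝ => t ^ n) _).const_mul_left (c ^ n)).congr_left
    fun t => by simp only [Function.comp, mul_pow, mul_comm]

lemma Real.isBigO_sq_sub_versine :
    (fun θ => θ ^ 2 - (2 * (1 - cos θ) + (1 - cos θ) ^ 2 / 3)) =O[𝓝 0] fun θ => θ ^ 6 := by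
  set e : ℝ → ℝ := fun θ => cos θ - (1 - θ ^ 2 / 2 + θ ^ 4 / 24)
  have he : e =O[𝓝 0] fun θ => θ ^ 6 := isBigO_cos_sub_taylor
  have hsplit : ∀ θ, θ ^ 2 - (2 * (1 - cos θ) + (1 - cos θ) ^ 2 / 3)
      = e θ * (2 + θ ^ 2 / 3 - θ ^ 4 / 36 - e θ / 3) + θ ^ 6 * (1 / 72 - θ ^ 2 / 1728) :=
    fun θ => by simp only [e]; ring
  simp only [hsplit]
  exact (he.mul_of_tendsto
      ((by fun_prop : Continuous fun θ => 2 + θ ^ 2 / 3 - θ ^ 4 / 36 - e θ / 3).tendsto 0)).add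
    ((isBigO_refl _ _).mul_of_tendsto
      ((by fun_prop : Continuous fun θ : ℝ => 1 / 72 - θ ^ 2 / 1728).tendsto 0))

lemma Real.sq_le_mul_one_sub_cos {x : ℝ} (hx : |x| ≤ π) : x ^ 2 ≤ π ^ 2 / 2 * (1 - cos x) := by
  have h := cos_le_one_sub_mul_cos_sq hx
  have hπ : 0 < π ^ 2 := by positivity
  field_simp at h ⊢
  nlinarith

lemma Real.isBigO_arccos_one_sub_sq :
    (fun x => arccos (1 - x) ^ 2 - (2 * x + x ^ 2 / 3)) =O[𝓝[≥] 0] fun x => x ^ 3 := by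
  have hθ : Tendsto (fun x => arccos (1 - x)) (𝓝[≥] 0) (𝓝 0) :=
    ((continuous_arccos.comp (continuous_sub_left 1)).tendsto' 0 0 (by simp)).mono_left
      nhdsWithin_le_nhds
  have hcos : ∀ᶠ x in 𝓝[≥] 0, cos (arccos (1 - x)) = 1 - x := by
    filter_upwards [self_mem_nhdsWithin,
      nhdsWithin_le_nhds (Iio_mem_nhds (show (0 : ℝ) < 2 by norm_num))] with x hx0 hx2
    exact cos_arccos (by linarith [hx0.out, hx2.out]) (by linarith [hx0.out])
  have h6 : (fun x => arccos (1 - x) ^ 6) =O[𝓝[≥] 0] fun x => x ^ 3 := by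
    refine IsBigO.of_bound ((π ^ 2 / 2) ^ 3) ?_
    filter_upwards [hcos, self_mem_nhdsWithin] with x hx hx0
    have hsq := sq_le_mul_one_sub_cos (x := arccos (1 - x))
      (abs_le.2 ⟨by linarith [arccos_nonneg (1 - x), pi_pos], arccos_le_pi _⟩)
    rw [hx, sub_sub_cancel] at hsq
    rw [norm_pow, norm_pow, Real.norm_eq_abs, Real.norm_eq_abs, abs_of_nonneg hx0.out,
      abs_of_nonneg (arccos_nonneg _), ← mul_pow, show 6 = 2 * 3 by rfl, pow_mul]
    exact pow_le_pow_left₀ (sq_nonneg _) hsq 3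
  refine ((isBigO_sq_sub_versine.comp_tendsto hθ).trans h6).congr' ?_ EventuallyEq.rfl
  filter_upwards [hcos] with x hx
  simp only [Function.comp, hx, sub_sub_cancel]

lemma isBigO_arccos_one_sub_sq_of_isBigO {ρ : ℝ → ℝ} {A B : ℝ}
    (hρ : (fun t => ρ t - (A * t ^ 2 - B * t ^ 4)) =O[𝓝 0] fun t => t ^ 6)
    (hρ_nonneg : ∀ᶠ t in 𝓝 0, 0 ≤ ρ t) :
    (fun t => arccos (1 - ρ t) ^ 2 - (2 * A * t ^ 2 + (A ^ 2 / 3 - 2 * B) * t ^ 4))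
      =O[𝓝 0] fun t => t ^ 6 := by
  set p : ℝ → ℝ := fun t => A * t ^ 2 - B * t ^ 4
  have hp : p =O[𝓝 0] fun t => t ^ 2 :=
    ((isBigO_refl (fun t : ℝ => t ^ 2) _).mul_of_tendsto
      ((by fun_prop : Continuous fun t : ℝ => A - B * t ^ 2).tendsto 0)).congr_left
      fun t => by simp only [p]; ring
  have hρp : ρ =O[𝓝 0] fun t => t ^ 2 :=
    ((hρ.trans (isLittleO_pow_pow (by norm_num : 2 < 6)).isBigO).add hp).congr_left
      fun t => by simp only [p]; ring
  have hsq : Tendsto (fun t : ℝ => t ^ 2) (𝓝 0) (𝓝 0) := (continuous_pow 2).tendsto' 0 0 (by simp)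
  have hρlim : Tendsto ρ (𝓝 0) (𝓝[≥] 0) :=
    tendsto_nhdsWithin_iff.2 ⟨hρp.trans_tendsto hsq, hρ_nonneg⟩
  have hinvert :
      (fun t => arccos (1 - ρ t) ^ 2 - (2 * ρ t + ρ t ^ 2 / 3)) =O[𝓝 0] fun t => t ^ 6 :=
    (isBigO_arccos_one_sub_sq.comp_tendsto hρlim).trans
      ((hρp.pow 3).congr_right fun t => by ring)
  have hsubst : (fun t => (ρ t - p t) * (2 + (ρ t + p t) / 3)) =O[𝓝 0] fun t => t ^ 6 :=
    hρ.mul_of_tendsto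
      (tendsto_const_nhds.add (((hρp.trans_tendsto hsq).add (hp.trans_tendsto hsq)).div_const 3))
  have hpoly : (fun t => t ^ 6 * (B ^ 2 * t ^ 2 / 3 - 2 * A * B / 3)) =O[𝓝 0] fun t => t ^ 6 :=
    (isBigO_refl _ _).mul_of_tendsto ((by fun_prop : Continuous _).tendsto 0)
  refine ((hinvert.add hsubst).add hpoly).congr_left fun t => ?_
  simp only [p]
  ring

lemma Real.cos_mul_cos_add_sin_mul_sin_mul (x y c : ℝ) :
    cos x * cos y + sin x * sin y * c = (1 + c) / 2 * cos (x - y) + (1 - c) / 2 * cos (x + y) := by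
  rw [cos_sub, cos_add]
  ring

lemma Real.cos_mul_cos_add_sin_mul_sin_mul_le_one (x y : ℝ) {c : ℝ} (hc : |c| ≤ 1) :
    cos x * cos y + sin x * sin y * c ≤ 1 := by
  rw [cos_mul_cos_add_sin_mul_sin_mul]
  obtain ⟨hc₁, hc₂⟩ := abs_le.1 hc
  nlinarith [cos_le_one (x - y), cos_le_one (x + y)]

lemma isBigO_one_sub_cos_mul_cos_add_sin_mul_sin_mul (a b c : ℝ) :
    (fun t => 1 - (cos (t * a) * cos (t * b) + sin (t * a) * sin (t * b) * c)
      - ((a ^ 2 + b ^ 2 - 2 * a * b * c) / 2 * t ^ 2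
        - (a ^ 4 + b ^ 4 + 6 * a ^ 2 * b ^ 2 - 4 * a * b * (a ^ 2 + b ^ 2) * c) / 24 * t ^ 4))
      =O[𝓝 0] fun t => t ^ 6 := by
  have hsub := isBigO_cos_sub_taylor.comp_mul_const (a - b)
  have hadd := isBigO_cos_sub_taylor.comp_mul_const (a + b)
  refine ((hsub.const_mul_left (-(1 + c) / 2)).add
    (hadd.const_mul_left (-(1 - c) / 2))).congr_left fun t => ?_
  rw [cos_mul_cos_add_sin_mul_sin_mul, ← mul_sub, ← mul_add]
  ring

theorem spherical_squared_distance_expansion_general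
    (a b φ : ℝ)
    (d : ℝ → ℝ)
    (hd : ∀ t, d t = Real.arccos (Real.cos (t * a) * Real.cos (t * b)
            + Real.sin (t * a) * Real.sin (t * b) * Real.cos φ)) :
    (fun t => d t ^ 2
        - (t ^ 2 * (a ^ 2 + b ^ 2 - 2 * a * b * Real.cos φ)
          - (1 / 3) * t ^ 4 * a ^ 2 * b ^ 2 * Real.sin φ ^ 2))
      =o[nhdsWithin 0 (Set.Ioi 0)] fun t => t ^ 4 := by
  have hρ_nonneg : ∀ᶠ t in 𝓝 0,
      0 ≤ 1 - (cos (t * a) * cos (t * b) + sin (t * a) * sin (t * b) * cos φ) :=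
    Eventually.of_forall fun t =>
      sub_nonneg.2 (cos_mul_cos_add_sin_mul_sin_mul_le_one _ _ (abs_cos_le_one φ))
  have hexpand := isBigO_arccos_one_sub_sq_of_isBigO
    (isBigO_one_sub_cos_mul_cos_add_sin_mul_sin_mul a b (cos φ)) hρ_nonneg
  refine ((hexpand.trans_isLittleO (isLittleO_pow_pow (by norm_num))).mono
    nhdsWithin_le_nhds).congr_left fun t => ?_
  rw [hd, sub_sub_cancel, sin_sq]
  ring

theorem spherical_squared_distance_expansion
    (a b φ : ℝ) (ha : 0 ≤ a) (hb : 0 ≤ b)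
    (d : ℝ → ℝ)
    (hd : ∀ t, d t = Real.arccos (Real.cos (t * a) * Real.cos (t * b)
            + Real.sin (t * a) * Real.sin (t * b) * Real.cos φ)) :
    (fun t => d t ^ 2
        - (t ^ 2 * (a ^ 2 + b ^ 2 - 2 * a * b * Real.cos φ)
          - (1 / 3) * t ^ 4 * a ^ 2 * b ^ 2 * Real.sin φ ^ 2))
      =o[nhdsWithin 0 (Set.Ioi 0)] fun t => t ^ 4 :=
  spherical_squared_distance_expansion_general a b φ d hd
end
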